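/- Let y_i be a positive argument place. If a morphism term of ℳ₀ in which the i-th argument of S is 1_C reduces by a sequence of D reductions to a term in which this argument is f, then the sequence includes a reduction step in whose redex all the argument places from Φ′_{y_i} are occupied by f while the i-th argument of S is 1_C. -/

import Mathlib

open CategoryTheory

universe u v

namespace GDin

/-! ### Graphs in the sense of the paper -/

/-- Vertices of a graph with `m` left-hand argument places, `n` right-hand argument
places and `g` auxiliary `G`-vertices. -/
abbrev Vtx (m n g : ℕ) := (Fin m ⊕ Fin n) ⊕ Fin g

/-- The "same component" relation generated by a set of edges. -/
def Conn {V : Type*} (E : V → V → Prop) : V → V → Prop := Relation.EqvGen E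

/-- A graph in the sense of the paper.  The sign (variance) functions `sL` (for the
left-hand argument places `x₁,…,x_m`) and `sR` (for the right-hand argument places
`y₁,…,y_n`) are parameters; `true` means positive (covariant), `false` negative.
The structure also carries the number `k` of connected components together with the
component classifier `π`. -/
structure GGraph (m n g : ℕ) (sL : Fin m → Bool) (sR : Fin n → Bool) : Type where
  edge : Vtx m n g → Vtx m n g → Prop
  symm : ∀ u v, edge u v → edge v u
  /-- condition 1: every vertex belongs to some edge -/
  covered : ∀ v, ∃ w, edge v w
  /-- condition 2: an edge joins two left-hand argument places iff they have opposite
  signs and lie in the same component -/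
  condX : ∀ i j : Fin m, edge (.inl (.inl i)) (.inl (.inl j)) ↔
    (sL i = !sL j ∧ Conn edge (.inl (.inl i)) (.inl (.inl j)))
  /-- condition 3 -/
  condY : ∀ i j : Fin n, edge (.inl (.inr i)) (.inl (.inr j)) ↔
    (sR i = !sR j ∧ Conn edge (.inl (.inr i)) (.inl (.inr j)))
  /-- condition 4 -/
  condXY : ∀ (i : Fin m) (j : Fin n), edge (.inl (.inl i)) (.inl (.inr j)) ↔
    (sL i = sR j ∧ Conn edge (.inl (.inl i)) (.inl (.inr j)))
  /-- condition 5, first half: if a component contains an edge between two argument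
  places then it contains no `G`-vertex -/
  condG₁ : ∀ v : Vtx m n g,
    (∃ u w : Fin m ⊕ Fin n, Conn edge (.inl u) v ∧ edge (.inl u) (.inl w)) →
      ∀ a : Fin g, ¬ Conn edge (.inr a) v
  /-- condition 5, second half: otherwise the component contains exactly one
  `G`-vertex -/
  condG₂ : ∀ v : Vtx m n g,
    (¬ ∃ u w : Fin m ⊕ Fin n, Conn edge (.inl u) v ∧ edge (.inl u) (.inl w)) →
      ∃! a : Fin g, Conn edge (.inr a) v
  /-- condition 5: every other vertex of such a component is joined to the
  `G`-vertex by an edge -/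
  condG₃ : ∀ (a : Fin g) (u : Fin m ⊕ Fin n),
    Conn edge (.inl u) (.inr a) → edge (.inl u) (.inr a)
  /-- the number of components -/
  k : ℕ
  /-- the component classifier -/
  π : Vtx m n g → Fin k
  π_surj : Function.Surjective π
  π_eq : ∀ u v, π u = π v ↔ Conn edge u v

namespace GGraph

variable {m n g : ℕ} {sL : Fin m → Bool} {sR : Fin n → Bool}

/-- component of the `i`-th left-hand argument place -/
def πL (Γ : GGraph m n g sL sR) (i : Fin m) : Fin Γ.k := Γ.π (.inl (.inl i))

/-- component of the `j`-th right-hand argument place -/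
def πR (Γ : GGraph m n g sL sR) (j : Fin n) : Fin Γ.k := Γ.π (.inl (.inr j))

end GGraph

/-! ### Variance-indexed categories and g-dinaturality -/

/-- `B` or `Bᵒᵖ` according to a variance. -/
def VarCat (B : Type u) [Category.{v} B] : Bool → Type u
  | true => B
  | false => Bᵒᵖ

instance (B : Type u) [Category.{v} B] : ∀ b, Category.{v} (VarCat B b)
  | true => (inferInstance : Category B)
  | false => (inferInstance : Category Bᵒᵖ)

variable {B : Type u} [Category.{v} B]

/-- The object of `B` or `Bᵒᵖ` with `P` at a positive argument place and `N` at a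
negative one. -/
def pairObj : (b : Bool) → B → B → VarCat B b
  | true, P, _ => P
  | false, _, N => Opposite.op N

/-- The morphism with `u` at a positive argument place and `v` (contravariantly) at a
negative one. -/
def pairHom : (b : Bool) → {P P' N N' : B} → (P ⟶ P') → (N' ⟶ N) →
    (pairObj b P N ⟶ pairObj b P' N')
  | true, _, _, _, _, u, _ => u
  | false, _, _, _, _, _, v => v.op

variable {ι : Type} {k : ℕ}

/-- The tuple of objects `⟨u,v⟩` with `u` in all positive and `v` in all negative
argument places. -/
@[reducible] def tupObj (s : ι → Bool) (P N : B) : ∀ i, VarCat B (s i) :=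
  fun i => pairObj (s i) P N

/-- The corresponding tuple of morphisms. -/
def tupHom (s : ι → Bool) {P P' N N' : B} (u : P ⟶ P') (v : N' ⟶ N) :
    (tupObj s P N ⟶ tupObj s P' N') :=
  fun i => pairHom (s i) u v

/-- The diagonal-like tuple of objects determined by an assignment of objects to
the components of a graph. -/
@[reducible] def diagObj (s : ι → Bool) (pl : ι → Fin k) (A : Fin k → B) :
    ∀ i, VarCat B (s i) :=
  fun i => pairObj (s i) (A (pl i)) (A (pl i))

/-- The tuple of objects obtained from the component assignment `A` by replacing the
value of component `c` by `P` at positive and `N` at negative argument places. -/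
def hexObj (s : ι → Bool) (pl : ι → Fin k) (c : Fin k) (A : Fin k → B) (P N : B) :
    ∀ i, VarCat B (s i) :=
  fun i => if pl i = c then pairObj (s i) P N else pairObj (s i) (A (pl i)) (A (pl i))

/-- The corresponding tuple of morphisms (identities outside component `c`). -/
def hexHom (s : ι → Bool) (pl : ι → Fin k) (c : Fin k) (A : Fin k → B)
    {P P' N N' : B} (u : P ⟶ P') (v : N' ⟶ N) :
    (hexObj s pl c A P N ⟶ hexObj s pl c A P' N') :=
  fun i => by
    unfold hexObj
    by_cases h : pl i = c
    · simp only [if_pos h]; exact pairHom (s i) u v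
    · simp only [if_neg h]; exact 𝟙 _

/-- update of a component assignment -/
def updF {γ : Type*} (A : Fin k → γ) (c : Fin k) (X : γ) : Fin k → γ :=
  fun j => if j = c then X else A j

theorem diag_upd (s : ι → Bool) (pl : ι → Fin k) (c : Fin k) (A : Fin k → B) (X : B) :
    diagObj s pl (updF A c X) = hexObj s pl c A X X := by
  funext i
  unfold diagObj hexObj updF
  by_cases h : pl i = c <;> simp [h]

/-- g-dinaturality of a transformation with respect to a graph: in every component
and for every morphism `f : P ⟶ Q` (all other components being kept fixed), the
g-dinaturality hexagon commutes. -/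
def IsGDin {m n gΓ : ℕ} {sL : Fin m → Bool} {sR : Fin n → Bool}
    (Γ : GGraph m n gΓ sL sR)
    (T : (∀ i : Fin m, VarCat B (sL i)) ⥤ B)
    (S : (∀ j : Fin n, VarCat B (sR j)) ⥤ B)
    (α : ∀ A : Fin Γ.k → B, T.obj (diagObj sL Γ.πL A) ⟶ S.obj (diagObj sR Γ.πR A)) :
    Prop :=
  ∀ (c : Fin Γ.k) (A : Fin Γ.k → B) (P Q : B) (f : P ⟶ Q),
    T.map (hexHom sL Γ.πL c A f (𝟙 Q)) ≫
      eqToHom (congrArg T.obj (diag_upd sL Γ.πL c A Q).symm) ≫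
      α (updF A c Q) ≫
      eqToHom (congrArg S.obj (diag_upd sR Γ.πR c A Q)) ≫
      S.map (hexHom sR Γ.πR c A (𝟙 Q) f)
    = T.map (hexHom sL Γ.πL c A (𝟙 P) f) ≫
      eqToHom (congrArg T.obj (diag_upd sL Γ.πL c A P).symm) ≫
      α (updF A c P) ≫
      eqToHom (congrArg S.obj (diag_upd sR Γ.πR c A P)) ≫
      S.map (hexHom sR Γ.πR c A f (𝟙 P))

/-- The g-dinaturality hexagon for a transformation whose graph has a single
component (so that only the signs of the argument places matter). -/
def SingleHex {ιx ιz : Type} (sx : ιx → Bool) (sz : ιz → Bool)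
    (F : (∀ i : ιx, VarCat B (sx i)) ⥤ B) (H : (∀ l : ιz, VarCat B (sz l)) ⥤ B)
    (φ : ∀ A : B, F.obj (tupObj sx A A) ⟶ H.obj (tupObj sz A A)) : Prop :=
  ∀ (P Q : B) (f : P ⟶ Q),
    F.map (tupHom sx f (𝟙 Q)) ≫ φ Q ≫ H.map (tupHom sz (𝟙 Q) f)
    = F.map (tupHom sx (𝟙 P) f) ≫ φ P ≫ H.map (tupHom sz f (𝟙 P))


/-! ### The set `ℳ₀` of `CF`-normal terms of `ℳ`, and `D` reduction -/

/-- the possible arguments `1_A`, `1_C`, `f` of `T`, `S`, `R` in a term of `ℳ₀` -/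
inductive MArg : Type
  | idA : MArg
  | idC : MArg
  | ff : MArg
deriving DecidableEq

section MZsec
variable {m n p gΦ gΨ : ℕ} {sx : Fin m → Bool} {sy : Fin n → Bool} {sz : Fin p → Bool}

/-- A term of `ℳ₀`, i.e. a `CF`-normal form `[R(t⃗)] β(Y⃗) [S(h⃗)] α(X⃗) [T(g⃗)]` of a
term of `ℳ`, of type `T⟨A,C⟩ → R⟨C,A⟩`.  Such a term is completely determined by the
tuples `X⃗` and `Y⃗` of objects from `{A, C}` (here `true` codes `C` and `false`
codes `A`), subject to the typing (compatibility) condition below; the argument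
vectors `g⃗`, `h⃗`, `t⃗` are then recovered by `MZ.g`, `MZ.h`, `MZ.t`. -/
structure MZ (Φ : GGraph m n gΦ sx sy) (Ψ : GGraph n p gΨ sy sz) : Type where
  Xv : Fin Φ.k → Bool
  Yv : Fin Ψ.k → Bool
  compat : ∀ j : Fin n,
    (sy j = true → ¬(Xv (Φ.πR j) = true ∧ Yv (Ψ.πL j) = false)) ∧
    (sy j = false → ¬(Yv (Ψ.πL j) = true ∧ Xv (Φ.πR j) = false))

variable {Φ : GGraph m n gΦ sx sy} {Ψ : GGraph n p gΨ sy sz}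

/-- the argument of `T` at the place `x_i` -/
def MZ.g (z : MZ Φ Ψ) (i : Fin m) : MArg :=
  if sx i then (if z.Xv (Φ.πL i) then .ff else .idA)
  else (if z.Xv (Φ.πL i) then .idC else .ff)

/-- the argument of `S` at the place `y_j` -/
def MZ.h (z : MZ Φ Ψ) (j : Fin n) : MArg :=
  if sy j then
    (if z.Xv (Φ.πR j) then .idC else if z.Yv (Ψ.πL j) then .ff else .idA)
  else
    (if z.Yv (Ψ.πL j) then .idC else if z.Xv (Φ.πR j) then .ff else .idA)

/-- the argument of `R` at the place `z_l` -/
def MZ.t (z : MZ Φ Ψ) (l : Fin p) : MArg :=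
  if sz l then (if z.Yv (Ψ.πR l) then .idC else .ff)
  else (if z.Yv (Ψ.πR l) then .ff else .idA)

/-- the argument occupying a (left- or right-hand) argument place of `Φ` -/
def MZ.occPhi (z : MZ Φ Ψ) : Fin m ⊕ Fin n → MArg := Sum.elim z.g z.h

/-- the argument occupying a (left- or right-hand) argument place of `Ψ` -/
def MZ.occPsi (z : MZ Φ Ψ) : Fin n ⊕ Fin p → MArg := Sum.elim z.h z.t

/-- One step of `D` reduction on the set `ℳ₀`, applied to the entire term: an
`(α_i)`-step replaces the `i`-th argument `C` of `α` by `A`, provided all the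
arguments `g_j` with `x_j ∈ Φ_i⁺` and all the arguments `h_j` with `y_j ∈ Φ_i⁻`
are `f`; the affected arguments are updated accordingly (which, the terms of `ℳ₀`
being determined by `X⃗` and `Y⃗`, is captured by updating `X⃗`).  `(β_i)`-steps are
analogous. -/
inductive DStep : MZ Φ Ψ → MZ Φ Ψ → Prop
  | alphaStep (z z' : MZ Φ Ψ) (i : Fin Φ.k) :
      z.Xv i = true →
      (∀ j : Fin m, sx j = true → Φ.πL j = i → z.g j = .ff) →
      (∀ j : Fin n, sy j = false → Φ.πR j = i → z.h j = .ff) →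
      z'.Xv = Function.update z.Xv i false →
      z'.Yv = z.Yv →
      DStep z z'
  | betaStep (z z' : MZ Φ Ψ) (i : Fin Ψ.k) :
      z.Yv i = true →
      (∀ j : Fin n, sy j = true → Ψ.πL j = i → z.h j = .ff) →
      (∀ l : Fin p, sz l = false → Ψ.πR l = i → z.t l = .ff) →
      z'.Yv = Function.update z.Yv i false →
      z'.Xv = z.Xv →
      DStep z z'

/-- a term of `ℳ₀` is in `D` normal form -/
def DNormal (z : MZ Φ Ψ) : Prop := ¬ ∃ z', DStep z z'

end MZsec

/-! For a positive `y_i`, the argument `h_i` is `1_C` exactly when `X` is `C` at the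
component of `y_i` in `Φ`. Along the sequence this entry of `X` must therefore switch from
`C` to `A` at some step, and only an `α`-step at that component does so. Its redex has `f`
on all of `Φ⁺` among the `x`'s and `Φ⁻` among the `y`'s of the component, and these contain
`Φ′_{y_i}`: an edge from the positive `y_i` leads to a positive `x` or a negative `y` of
the same component. -/

theorem exists_switch_lt {P : ℕ → Prop} : ∀ {q : ℕ}, P 0 → ¬ P q → ∃ t < q, P t ∧ ¬ P (t + 1)
  | 0, h0, hq => absurd h0 hq
  | q + 1, h0, hq => by
    by_cases hPq : P q
    · exact ⟨q, q.lt_succ_self, hPq, hq⟩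
    · obtain ⟨t, htq, hPt, hPt1⟩ := exists_switch_lt h0 hPq
      exact ⟨t, htq.trans q.lt_succ_self, hPt, hPt1⟩

namespace GGraph

variable {m n g : ℕ} {sL : Fin m → Bool} {sR : Fin n → Bool} (Γ : GGraph m n g sL sR)

theorem sign_eq_and_πL_eq_of_edge_inr_inl {i : Fin n} {j : Fin m}
    (h : Γ.edge (.inl (.inr i)) (.inl (.inl j))) : sL j = sR i ∧ Γ.πL j = Γ.πR i := by
  obtain ⟨hs, hc⟩ := (Γ.condXY j i).mp (Γ.symm _ _ h)
  exact ⟨hs, (Γ.π_eq _ _).mpr hc⟩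

theorem sign_eq_not_and_πR_eq_of_edge_inr_inr {i j : Fin n}
    (h : Γ.edge (.inl (.inr i)) (.inl (.inr j))) : sR j = !sR i ∧ Γ.πR j = Γ.πR i := by
  obtain ⟨hs, hc⟩ := (Γ.condY i j).mp h
  exact ⟨by simp [hs], ((Γ.π_eq _ _).mpr hc).symm⟩

end GGraph

section Reduction

variable {m n p gΦ gΨ : ℕ} {sx : Fin m → Bool} {sy : Fin n → Bool} {sz : Fin p → Bool}
  {Φ : GGraph m n gΦ sx sy} {Ψ : GGraph n p gΨ sy sz}

def MZ.IsAlphaRedex (z : MZ Φ Ψ) (c : Fin Φ.k) : Prop :=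
  z.Xv c = true ∧
    (∀ j : Fin m, sx j = true → Φ.πL j = c → z.g j = .ff) ∧
    (∀ j : Fin n, sy j = false → Φ.πR j = c → z.h j = .ff)

theorem MZ.h_eq_idC_iff_of_pos (z : MZ Φ Ψ) {j : Fin n} (hj : sy j = true) :
    z.h j = .idC ↔ z.Xv (Φ.πR j) = true := by
  simp only [MZ.h, hj, if_true]
  split_ifs <;> simp_all

theorem DStep.isAlphaRedex_of_Xv_reset {z z' : MZ Φ Ψ} (hs : DStep z z') {c : Fin Φ.k}
    (hc : z.Xv c = true) (hc' : z'.Xv c ≠ true) : z.IsAlphaRedex c := by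
  cases hs with
  | alphaStep c₀ hX hg hh hX' _ =>
    obtain rfl : c = c₀ := by
      by_contra hne
      exact hc' (by rwa [hX', Function.update_of_ne hne])
    exact ⟨hX, hg, hh⟩
  | betaStep _ _ _ _ _ hX' => exact absurd (hX' ▸ hc) hc'

theorem MZ.IsAlphaRedex.occPhi_eq_ff_of_edge {z : MZ Φ Ψ} {i : Fin n} (hpos : sy i = true)
    (hz : z.IsAlphaRedex (Φ.πR i)) {v : Fin m ⊕ Fin n}
    (hv : Φ.edge (.inl (.inr i)) (.inl v)) : z.occPhi v = .ff := by
  obtain ⟨-, hg, hh⟩ := hz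
  cases v with
  | inl j =>
    obtain ⟨hs, hc⟩ := Φ.sign_eq_and_πL_eq_of_edge_inr_inl hv
    exact hg j (hs.trans hpos) hc
  | inr j =>
    obtain ⟨hs, hc⟩ := Φ.sign_eq_not_and_πR_eq_of_edge_inr_inr hv
    exact hh j (by simp [hs, hpos]) hc

end Reduction

/-- Lemma 2.7 of the paper.  Let `y_i` be a positive argument
place.  If a morphism term of `ℳ₀` in which the `i`-th argument of `S` is `1_C`
reduces by a sequence of `D` reductions to a term in which this argument is `f`,
then the sequence includes a reduction step in whose redex all the argument places
from `Φ′_{y_i}` (the argument places of `Φ` joined to `y_i` by an edge) are occupied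
by `f` while the `i`-th argument of `S` is `1_C`. -/
theorem D_seq_posY_idC_to_f
    {m n p gΦ gΨ : ℕ} {sx : Fin m → Bool} {sy : Fin n → Bool} {sz : Fin p → Bool}
    {Φ : GGraph m n gΦ sx sy} {Ψ : GGraph n p gΨ sy sz}
    (i : Fin n) (hpos : sy i = true)
    (q : ℕ) (seq : ℕ → MZ Φ Ψ) (hstep : ∀ t, t < q → DStep (seq t) (seq (t + 1)))
    (h0 : (seq 0).h i = .idC) (hq : (seq q).h i = .ff) :
    ∃ t, t < q ∧
      (∀ v : Fin m ⊕ Fin n, Φ.edge (.inl (.inr i)) (.inl v) →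
        (seq t).occPhi v = .ff) ∧
      (seq t).h i = .idC := by
  have hX : ∀ t, (seq t).h i = .idC ↔ (seq t).Xv (Φ.πR i) = true :=
    fun t => (seq t).h_eq_idC_iff_of_pos hpos
  obtain ⟨t, htq, hXt, hXt1⟩ := exists_switch_lt (P := fun t => (seq t).Xv (Φ.πR i) = true)
    ((hX 0).mp h0) (fun h => by simp [(hX q).mpr h] at hq)
  have hredex := (hstep t htq).isAlphaRedex_of_Xv_reset hXt hXt1
  exact ⟨t, htq, fun v hv => hredex.occPhi_eq_ff_of_edge hpos hv, (hX t).mpr hXt⟩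

end GDin
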